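/- arXiv:1608.02883 — 5 statements merged into one kernel-verified Lean document; each statement's English description precedes it below -/
import Mathlib

section
/- Let G be a finite simple graph, and let x, v, y be distinct vertices with {x,v} an edge of G, {x,y} not an edge of G, and |N_G(x,y)| > |N_G(x,v)| (in particular x and y have a common neighbor). Let G' be obtained from G by deleting the edge {x,v} and adding the edge {x,y}. Then any two vertices that are connected by a walk in G' are connected by a walk in G; in particular, the rewiring cannot merge two distinct connected components of G into one. -/
open SimpleGraph

/-- The graph obtained from `G` by deleting the edge `{x,v}` and adding the edge `{x,y}`. -/
def rewire {V : Type*} (G : SimpleGraph V) (x v y : V) : SimpleGraph V :=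
  G.deleteEdges {s(x, v)} ⊔ SimpleGraph.fromEdgeSet {s(x, y)}

/-- if `{x,v}` is an edge, `{x,y}` is a non-edge and
`|N(x,y)| > |N(x,v)|`, then any two vertices reachable from each other in the rewired
graph were already reachable in `G`; in particular the rewiring cannot merge two
connected components. -/
theorem rewire_reachable {V : Type*} [Fintype V] (G : SimpleGraph V) (x v y : V)
    (hxv : x ≠ v) (hxy : x ≠ y) (hvy : v ≠ y)
    (hadj : G.Adj x v) (hnadj : ¬ G.Adj x y)
    (hN : (G.commonNeighbors x v).ncard < (G.commonNeighbors x y).ncard) :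
    ∀ a b : V, (rewire G x v y).Reachable a b → G.Reachable a b := by
  -- there is a common neighbor z of x and y in G
  have hne : (G.commonNeighbors x y).Nonempty := by
    apply Set.nonempty_of_ncard_ne_zero
    omega
  obtain ⟨z, hzx, hzy⟩ := hne
  have hxyreach : G.Reachable x y :=
    (hzx.reachable).trans (G.adj_symm hzy).reachable
  -- every edge of the rewired graph joins G-reachable vertices
  have key : ∀ a b : V, (rewire G x v y).Adj a b → G.Reachable a b := by
    intro a b hab
    rcases hab with h | h
    · exact h.1.reachable
    · rcases h with ⟨hmem, hne'⟩
      rw [Sym2.toRel_prop, Set.mem_singleton_iff, Sym2.eq_iff] at hmem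
      rcases hmem with ⟨rfl, rfl⟩ | ⟨rfl, rfl⟩
      · exact hxyreach
      · exact hxyreach.symm
  intro a b h
  obtain ⟨w⟩ := h
  induction w with
  | nil => exact Reachable.refl _
  | cons hadj' _ ih => exact (key _ _ hadj').trans ih
end

section
/- Let n and k be integers with 2 ≤ k < n/4, and let L(n,k) be the ring lattice on vertices ZMod n where i is adjacent to j if and only if i ≠ j and the circular distance between i and j is at most k. Then for any vertex i and any integer m with 1 ≤ m ≤ k, the adjacent pair {i, i+m} has exactly 2k - m - 1 common neighbors, i.e., the edge {i, i+m} participates in exactly 2k - m - 1 triangles. -/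
open SimpleGraph

/-- The ring lattice `L(n,k)` on `ZMod n`: distinct vertices `i` and `j` are adjacent iff
their circular distance `min((i-j).val, (j-i).val)` is at most `k`. -/
def ringLattice (n k : ℕ) : SimpleGraph (ZMod n) :=
  SimpleGraph.fromRel (fun i j => min (i - j).val (j - i).val ≤ k)

lemma ringLattice_adj (n k : ℕ) [NeZero n] (a b : ZMod n) :
    (ringLattice n k).Adj a b ↔ a ≠ b ∧ ((b - a).val ≤ k ∨ n - (b - a).val ≤ k) := by
  have hv : (a - b) = -(b - a) := by ring
  have hneg : (-(b - a)).val = if (b - a) = 0 then 0 else n - (b - a).val :=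
    ZMod.neg_val (b - a)
  have hne : a ≠ b ↔ (b - a) ≠ 0 := by
    rw [ne_comm, ← sub_ne_zero]
  rw [ringLattice, SimpleGraph.fromRel_adj, hv]
  constructor
  · rintro ⟨h1, h2⟩
    refine ⟨h1, ?_⟩
    rw [hne] at h1
    rw [if_neg h1] at hneg
    rcases h2 with h2 | h2 <;> rw [hneg] at h2 <;> omega
  · rintro ⟨h1, h2⟩
    refine ⟨h1, ?_⟩
    rw [hne] at h1
    rw [if_neg h1] at hneg
    left; rw [hneg]; omega

/-- in the ring lattice `L(n,k)` with `2 ≤ k < n/4`, for any vertex `i` and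
any `1 ≤ m ≤ k`, the adjacent pair `{i, i+m}` has exactly `2k - m - 1` common neighbors. -/
theorem ringLattice_edge_triangles (n k : ℕ) (hk : 2 ≤ k) (hn : 4 * k < n)
    (i : ZMod n) (m : ℕ) (hm1 : 1 ≤ m) (hmk : m ≤ k) :
    ((ringLattice n k).commonNeighbors i (i + (m : ZMod n))).ncard = 2 * k - m - 1 := by
  haveI : NeZero n := ⟨by omega⟩
  have hmn : m < n := by omega
  set F : Finset ℕ := ((Finset.Icc 1 k).erase m) ∪ Finset.Icc (n - k + m) (n - 1) with hF
  have hmemF : ∀ t : ℕ, t ∈ F ↔ ((1 ≤ t ∧ t ≤ k ∧ t ≠ m) ∨ (n - k + m ≤ t ∧ t ≤ n - 1)) := by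
    intro t
    simp only [hF, Finset.mem_union, Finset.mem_erase, Finset.mem_Icc]
    tauto
  have hFlt : ∀ t ∈ F, t < n := by
    intro t ht
    rw [hmemF] at ht
    omega
  -- value of (t - m) in ZMod n
  have hsub : ∀ t : ℕ, t < n → ((t : ZMod n) - (m : ZMod n)).val =
      if m ≤ t then t - m else t + n - m := by
    intro t ht
    by_cases h : m ≤ t
    · rw [if_pos h]
      have : (t : ZMod n) - (m : ZMod n) = ((t - m : ℕ) : ZMod n) := by
        push_cast [Nat.cast_sub h]; ring
      rw [this, ZMod.val_cast_of_lt (by omega)]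
    · rw [if_neg h]
      have : (t : ZMod n) - (m : ZMod n) = ((t + n - m : ℕ) : ZMod n) := by
        have h2 : m ≤ t + n := by omega
        push_cast [Nat.cast_sub h2, ZMod.natCast_self]
        ring
      rw [this, ZMod.val_cast_of_lt (by omega)]
  have hset : (ringLattice n k).commonNeighbors i (i + (m : ZMod n)) =
      ↑(F.image fun t : ℕ => i + (t : ZMod n)) := by
    ext x
    simp only [SimpleGraph.mem_commonNeighbors, Finset.coe_image, Set.mem_image,
      Finset.mem_coe]
    rw [ringLattice_adj, ringLattice_adj]
    have hxi : ((x - i).val : ZMod n) = x - i := ZMod.natCast_rightInverse (x - i)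
    have hx2 : x - (i + (m : ZMod n)) = ((x - i).val : ZMod n) - (m : ZMod n) := by
      rw [hxi]; ring
    have htlt : (x - i).val < n := ZMod.val_lt _
    constructor
    · rintro ⟨⟨h1, h2⟩, ⟨h3, h4⟩⟩
      refine ⟨(x - i).val, ?_, by rw [hxi]; ring⟩
      have ht0 : (x - i).val ≠ 0 := by
        simp only [ne_eq, ZMod.val_eq_zero, sub_eq_zero]
        exact fun h => h1 h.symm
      have hs0 : (x - (i + (m : ZMod n))).val ≠ 0 := by
        simp only [ne_eq, ZMod.val_eq_zero, sub_eq_zero]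
        exact fun h => h3 h.symm
      rw [hx2, hsub _ htlt] at h4 hs0
      rw [hmemF]
      by_cases hcm : m ≤ (x - i).val
      · rw [if_pos hcm] at h4 hs0
        omega
      · rw [if_neg hcm] at h4 hs0
        omega
    · rintro ⟨t, ht, rfl⟩
      rw [hmemF] at ht
      have htn : t < n := by omega
      have hval : (i + (t : ZMod n) - i).val = t := by
        rw [add_sub_cancel_left, ZMod.val_cast_of_lt htn]
      have hne1 : i ≠ i + (t : ZMod n) := by
        intro h
        have : (i + (t : ZMod n) - i).val = 0 := by rw [← h, sub_self, ZMod.val_zero]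
        omega
      have hs : (i + (t : ZMod n) - (i + (m : ZMod n))).val =
          if m ≤ t then t - m else t + n - m := by
        have : i + (t : ZMod n) - (i + (m : ZMod n)) = (t : ZMod n) - (m : ZMod n) := by ring
        rw [this, hsub t htn]
      have hne2 : i + (m : ZMod n) ≠ i + (t : ZMod n) := by
        intro h
        have : (i + (t : ZMod n) - (i + (m : ZMod n))).val = 0 := by
          rw [← h, sub_self, ZMod.val_zero]
        rw [hs] at this
        by_cases hcm : m ≤ t
        · rw [if_pos hcm] at this; omega
        · rw [if_neg hcm] at this; omega
      refine ⟨⟨hne1, ?_⟩, ⟨hne2, ?_⟩⟩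
      · rw [hval]; omega
      · rw [hs]
        by_cases hcm : m ≤ t
        · rw [if_pos hcm]; omega
        · rw [if_neg hcm]; omega
  rw [hset, Set.ncard_coe_finset]
  rw [Finset.card_image_of_injOn]
  · have hdisj : Disjoint ((Finset.Icc 1 k).erase m) (Finset.Icc (n - k + m) (n - 1)) := by
      rw [Finset.disjoint_left]
      intro a ha hb
      simp only [Finset.mem_erase, Finset.mem_Icc] at ha hb
      omega
    rw [hF, Finset.card_union_of_disjoint hdisj,
      Finset.card_erase_of_mem (by simp [Finset.mem_Icc]; omega), Nat.card_Icc, Nat.card_Icc]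
    omega
  · intro t1 h1 t2 h2 heq
    simp only [Finset.mem_coe] at h1 h2
    have e1 : (t1 : ZMod n) = (t2 : ZMod n) := by
      have := heq
      simpa using this
    have := congrArg ZMod.val e1
    rwa [ZMod.val_cast_of_lt (hFlt t1 h1), ZMod.val_cast_of_lt (hFlt t2 h2)] at this
end

section
/- Let G be a finite simple graph that is d-regular with d ≥ 1, and let x, v, y be distinct vertices with {x,v} an edge of G and {x,y} not an edge of G. Let G' be obtained from G by deleting the edge {x,v} and adding the edge {x,y}. Then the number of wedges strictly increases: N_p(G') = N_p(G) + 1. -/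
open SimpleGraph

/-- The number of wedges (paths of length two) of a graph:
`N_p(H) = Σ_{u ∈ V} C(deg_H(u), 2)`. -/
noncomputable def wedgeCount {V : Type*} [Fintype V] (G : SimpleGraph V) : ℕ :=
  ∑ u : V, ((G.neighborSet u).ncard).choose 2

/-!
Rewiring `{x,v}` to `{x,y}` leaves every degree unchanged except that `deg v` drops to `d - 1`
and `deg y` rises to `d + 1`; the wedge count then changes by
`C(d-1,2) + C(d+1,2) - 2 C(d,2) = 1`, which is where `d ≥ 1` enters.
-/

namespace SimpleGraph

variable {V : Type*} (G : SimpleGraph V) {x v y : V}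

theorem rewire_adj {a b : V} :
    (rewire G x v y).Adj a b ↔ G.Adj a b ∧ s(a, b) ≠ s(x, v) ∨ s(a, b) = s(x, y) ∧ a ≠ b := by
  simp [rewire]

theorem neighborSet_rewire_left (hxy : x ≠ y) :
    (rewire G x v y).neighborSet x = insert y (G.neighborSet x \ {v}) := by
  ext b
  simp only [mem_neighborSet, rewire_adj, ne_eq, Sym2.eq_iff, Set.mem_insert_iff, Set.mem_sdiff,
    Set.mem_singleton_iff]
  constructor
  · tauto
  · rintro (rfl | ⟨h, hb⟩)
    · tauto
    · refine Or.inl ⟨h, ?_⟩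
      rintro (⟨-, rfl⟩ | ⟨-, rfl⟩)
      exacts [hb rfl, G.irrefl h]

theorem neighborSet_rewire_removed (hvx : v ≠ x) (hvy : v ≠ y) :
    (rewire G x v y).neighborSet v = G.neighborSet v \ {x} := by
  ext b
  simp only [mem_neighborSet, rewire_adj, ne_eq, Sym2.eq_iff, Set.mem_sdiff, Set.mem_singleton_iff]
  tauto

theorem neighborSet_rewire_added (hyx : y ≠ x) (hyv : y ≠ v) :
    (rewire G x v y).neighborSet y = insert x (G.neighborSet y) := by
  ext b
  simp only [mem_neighborSet, rewire_adj, ne_eq, Sym2.eq_iff, Set.mem_insert_iff]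
  constructor
  · tauto
  · rintro (rfl | h) <;> tauto

theorem neighborSet_rewire_of_ne {u : V} (hux : u ≠ x) (huv : u ≠ v) (huy : u ≠ y) :
    (rewire G x v y).neighborSet u = G.neighborSet u := by
  ext b
  simp only [mem_neighborSet, rewire_adj, ne_eq, Sym2.eq_iff]
  tauto

variable {G}

theorem ncard_neighborSet_rewire_removed (hxv : x ≠ v) (hvy : v ≠ y) (hadj : G.Adj x v) :
    ((rewire G x v y).neighborSet v).ncard = (G.neighborSet v).ncard - 1 := by
  rw [G.neighborSet_rewire_removed hxv.symm hvy]
  exact Set.ncard_sdiff_singleton_of_mem hadj.symm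

theorem ncard_neighborSet_rewire_added [Finite V] (hxy : x ≠ y) (hvy : v ≠ y) (hnadj : ¬G.Adj x y) :
    ((rewire G x v y).neighborSet y).ncard = (G.neighborSet y).ncard + 1 :=
  G.neighborSet_rewire_added hxy.symm hvy.symm ▸
    Set.ncard_insert_of_notMem fun h ↦ hnadj (G.adj_symm h)

theorem ncard_neighborSet_rewire_of_ne {u : V} (huv : u ≠ v) (huy : u ≠ y) (hxy : x ≠ y)
    (hadj : G.Adj x v) (hnadj : ¬G.Adj x y) :
    ((rewire G x v y).neighborSet u).ncard = (G.neighborSet u).ncard := by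
  obtain rfl | hux := eq_or_ne u x
  · rw [G.neighborSet_rewire_left hxy]
    exact Set.ncard_exchange (s := G.neighborSet u) hnadj hadj
  · rw [G.neighborSet_rewire_of_ne hux huv huy]

end SimpleGraph

theorem Finset.sum_add_eq_sum_add_of_eq_off_pair {ι M : Type*} [Fintype ι] [DecidableEq ι]
    [AddCommMonoid M] {a b : ι} (hab : a ≠ b) {f g : ι → M}
    (h : ∀ i, i ≠ a → i ≠ b → f i = g i) :
    ∑ i, f i + (g a + g b) = ∑ i, g i + (f a + f b) := by
  have hoff : ∑ i ∈ ({a, b} : Finset ι)ᶜ, f i = ∑ i ∈ ({a, b} : Finset ι)ᶜ, g i :=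
    Finset.sum_congr rfl fun i hi ↦ by
      simp only [mem_compl, mem_insert, mem_singleton, not_or] at hi
      exact h i hi.1 hi.2
  rw [← Finset.sum_add_sum_compl {a, b} f, ← Finset.sum_add_sum_compl {a, b} g,
    Finset.sum_pair hab, Finset.sum_pair hab, hoff]
  abel

theorem Nat.choose_two_pred_add_choose_two_succ {d : ℕ} (hd : 1 ≤ d) :
    (d - 1).choose 2 + (d + 1).choose 2 = d.choose 2 + d.choose 2 + 1 := by
  obtain ⟨n, rfl⟩ := Nat.exists_eq_add_of_le' hd
  simp only [add_tsub_cancel_right, Nat.choose_succ_succ', Nat.choose_zero_right, zero_add,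
    Nat.choose_one_right, Nat.reduceAdd]
  omega

/-- if `G` is `d`-regular with `d ≥ 1`, then rewiring the edge `{x,v}` to
the non-edge `{x,y}` increases the number of wedges by exactly one. -/
theorem wedgeCount_rewire_regular {V : Type*} [Fintype V] (G : SimpleGraph V) (d : ℕ)
    (hd : 1 ≤ d) (hreg : ∀ u : V, (G.neighborSet u).ncard = d)
    (x v y : V) (hxv : x ≠ v) (hxy : x ≠ y) (hvy : v ≠ y)
    (hadj : G.Adj x v) (hnadj : ¬ G.Adj x y) :
    wedgeCount (rewire G x v y) = wedgeCount G + 1 := by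
  classical
  have hv := ncard_neighborSet_rewire_removed hxv hvy hadj
  have hy := ncard_neighborSet_rewire_added hxy hvy hnadj
  have hsum := Finset.sum_add_eq_sum_add_of_eq_off_pair hvy
    (f := fun u ↦ ((rewire G x v y).neighborSet u).ncard.choose 2)
    (g := fun u ↦ (G.neighborSet u).ncard.choose 2)
    fun u huv huy ↦ by rw [ncard_neighborSet_rewire_of_ne huv huy hxy hadj hnadj]
  beta_reduce at hsum
  rw [hv, hy, hreg v, hreg y] at hsum
  unfold wedgeCount
  have := Nat.choose_two_pred_add_choose_two_succ hd
  omega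
end

section
/- Let G be a finite simple graph and let x, y, u, v be four distinct vertices such that {x,u} and {y,v} are edges of G while {x,y} and {u,v} are not edges of G. Let G' be the graph obtained from G by deleting the edges {x,u} and {y,v} and adding the edges {x,y} and {u,v}. Then the number of triangles satisfies N_t(G') = N_t(G) - |N_G(x,u)| - |N_G(y,v)| + |N_{G'}(x,y)| + |N_{G'}(u,v)|, where N_H(a,b) denotes the set of common neighbors of a and b in the graph H. -/
open SimpleGraph

/-- The number of triangles (3-cliques) of a graph. -/
noncomputable def triangleCount {V : Type*} (G : SimpleGraph V) : ℕ :=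
  (G.cliqueSet 3).ncard

/-- The degree-preserving double rewiring: delete the edges `{x,u}` and `{y,v}` and add
the edges `{x,y}` and `{u,v}`. -/
def rewire2 {V : Type*} (G : SimpleGraph V) (x u y v : V) : SimpleGraph V :=
  G.deleteEdges {s(x, u), s(y, v)} ⊔ SimpleGraph.fromEdgeSet {s(x, y), s(u, v)}

lemma rewire2_adj {V : Type*} (G : SimpleGraph V) (x u y v a b : V) :
    (rewire2 G x u y v).Adj a b ↔
      (G.Adj a b ∧ s(a,b) ≠ s(x,u) ∧ s(a,b) ≠ s(y,v)) ∨
      ((s(a,b) = s(x,y) ∨ s(a,b) = s(u,v)) ∧ a ≠ b) := by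
  simp [rewire2, deleteEdges_adj, fromEdgeSet_adj]

lemma exists_third {V : Type*} [DecidableEq V] {s : Finset V} {a b : V} (hc : s.card = 3)
    (ha : a ∈ s) (hb : b ∈ s) (hab : a ≠ b) :
    ∃ w, w ≠ a ∧ w ≠ b ∧ s = {a, b, w} := by
  have hsub : ({a, b} : Finset V) ⊆ s := by
    intro z hz
    rcases Finset.mem_insert.mp hz with rfl | hz
    · exact ha
    · rw [Finset.mem_singleton] at hz; subst hz; exact hb
  have h2 : ({a, b} : Finset V).card = 2 := Finset.card_pair hab
  have h1 : (s \ {a, b}).card = 1 := by rw [Finset.card_sdiff_of_subset hsub, hc, h2]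
  obtain ⟨w, hw⟩ := Finset.card_eq_one.mp h1
  have hwm : w ∈ s \ ({a, b} : Finset V) := hw ▸ Finset.mem_singleton_self w
  rw [Finset.mem_sdiff, Finset.mem_insert, Finset.mem_singleton] at hwm
  refine ⟨w, fun h => hwm.2 (Or.inl h), fun h => hwm.2 (Or.inr h), ?_⟩
  have hu := Finset.sdiff_union_of_subset hsub
  rw [hw] at hu
  ext z
  rw [← hu]
  simp only [Finset.mem_union, Finset.mem_insert, Finset.mem_singleton]
  tauto

lemma count_edge {V : Type*} [Fintype V] [DecidableEq V] (H : SimpleGraph V)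
    [DecidableRel H.Adj] {a b : V} (hab : H.Adj a b) :
    ((H.cliqueFinset 3).filter (fun s => a ∈ s ∧ b ∈ s)).card
      = (H.commonNeighbors a b).ncard := by
  classical
  rw [Set.ncard_eq_toFinset_card']
  rw [← Finset.card_image_of_injOn (f := fun w => ({a, b, w} : Finset V))
    (s := (H.commonNeighbors a b).toFinset) ?inj]
  case inj =>
    intro w1 h1 w2 h2 he
    simp only [Finset.mem_coe, Set.mem_toFinset, mem_commonNeighbors] at h1 h2
    have h12 : ({a, b, w1} : Finset V) = {a, b, w2} := he
    have hm : w1 ∈ ({a, b, w2} : Finset V) := by rw [← h12]; simp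
    simp only [Finset.mem_insert, Finset.mem_singleton] at hm
    rcases hm with rfl | rfl | rfl
    · exact (H.irrefl h1.1).elim
    · exact (H.irrefl h1.2).elim
    · rfl
  congr 1
  ext s
  simp only [Finset.mem_image, Finset.mem_filter, mem_cliqueFinset_iff, Set.mem_toFinset]
  constructor
  · rintro ⟨hcl, has, hbs⟩
    obtain ⟨w, hwa, hwb, rfl⟩ := exists_third hcl.card_eq has hbs hab.ne
    have h3 := is3Clique_triple_iff.mp hcl
    exact ⟨w, (mem_commonNeighbors _).mpr ⟨h3.2.1, h3.2.2⟩, rfl⟩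
  · rintro ⟨w, hw, rfl⟩
    rw [mem_commonNeighbors] at hw
    exact ⟨is3Clique_triple_iff.mpr ⟨hab, hw.1, hw.2⟩, by simp, by simp⟩

lemma split_count {α : Type*} (T : Finset α) (p q : α → Prop)
    [DecidablePred p] [DecidablePred q] (h : ∀ s ∈ T, p s → ¬ q s) :
    T.card = (T.filter p).card + (T.filter q).card
      + (T.filter (fun s => ¬ p s ∧ ¬ q s)).card := by
  have h1 := Finset.card_filter_add_card_filter_not (p := p) (s := T)
  have h2 := Finset.card_filter_add_card_filter_not (p := q)
    (s := T.filter (fun s => ¬ p s))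
  rw [Finset.filter_filter, Finset.filter_filter] at h2
  have h3 : T.filter (fun s => ¬ p s ∧ q s) = T.filter q := by
    ext s
    simp only [Finset.mem_filter]
    constructor
    · rintro ⟨hs, _, hq⟩; exact ⟨hs, hq⟩
    · rintro ⟨hs, hq⟩; exact ⟨hs, fun hp => h s hs hp hq, hq⟩
  rw [h3] at h2
  omega

/-- after the double rewiring replacing the edges `{x,u}`, `{y,v}` by the
non-edges `{x,y}`, `{u,v}`, the triangle count satisfies
`N_t(G') = N_t(G) - |N_G(x,u)| - |N_G(y,v)| + |N_{G'}(x,y)| + |N_{G'}(u,v)|`. -/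
theorem triangleCount_rewire2 {V : Type*} [Fintype V] (G : SimpleGraph V)
    (x y u v : V)
    (hxy : x ≠ y) (hxu : x ≠ u) (hxv : x ≠ v) (hyu : y ≠ u) (hyv : y ≠ v) (huv : u ≠ v)
    (hexu : G.Adj x u) (heyv : G.Adj y v)
    (hnxy : ¬ G.Adj x y) (hnuv : ¬ G.Adj u v) :
    (triangleCount (rewire2 G x u y v) : ℤ) =
      (triangleCount G : ℤ)
        - (G.commonNeighbors x u).ncard - (G.commonNeighbors y v).ncard
        + ((rewire2 G x u y v).commonNeighbors x y).ncard
        + ((rewire2 G x u y v).commonNeighbors u v).ncard := by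
  classical
  set G' := rewire2 G x u y v with hG'
  have hG'xy : G'.Adj x y := (rewire2_adj G x u y v x y).mpr (Or.inr ⟨Or.inl rfl, hxy⟩)
  have hG'uv : G'.Adj u v := (rewire2_adj G x u y v u v).mpr (Or.inr ⟨Or.inr rfl, huv⟩)
  have hG'nxu : ¬ G'.Adj x u := by
    rw [rewire2_adj]
    rintro (⟨_, h, _⟩ | ⟨(h | h), _⟩)
    · exact h rfl
    · rw [Sym2.eq_iff] at h
      rcases h with ⟨h1, h2⟩ | ⟨h1, h2⟩
      · exact hyu h2.symm
      · exact hxy h1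
    · rw [Sym2.eq_iff] at h
      rcases h with ⟨h1, h2⟩ | ⟨h1, h2⟩
      · exact hxu h1
      · exact hxv h1
  have hG'nyv : ¬ G'.Adj y v := by
    rw [rewire2_adj]
    rintro (⟨_, _, h⟩ | ⟨(h | h), _⟩)
    · exact h rfl
    · rw [Sym2.eq_iff] at h
      rcases h with ⟨h1, h2⟩ | ⟨h1, h2⟩
      · exact hxy h1.symm
      · exact hxv h2.symm
    · rw [Sym2.eq_iff] at h
      rcases h with ⟨h1, h2⟩ | ⟨h1, h2⟩
      · exact hyu h1
      · exact hyv h1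
  set T := G.cliqueFinset 3 with hT
  set T' := G'.cliqueFinset 3 with hT'
  -- no triangle contains 4 distinct vertices
  have hcard4 : ({x, y, u, v} : Finset V).card = 4 := by
    rw [Finset.card_insert_of_notMem (by simp [hxy, hxu, hxv]),
      Finset.card_insert_of_notMem (by simp [hyu, hyv]), Finset.card_pair huv]
  have hdisj : ∀ s : Finset V, s.card = 3 → x ∈ s → y ∈ s → u ∈ s → v ∈ s → False := by
    intro s hc hx hy hu hv
    have hsub : ({x, y, u, v} : Finset V) ⊆ s := by
      intro z hz
      simp only [Finset.mem_insert, Finset.mem_singleton] at hz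
      rcases hz with rfl | rfl | rfl | rfl <;> assumption
    have := Finset.card_le_card hsub
    omega
  have hsplitG : T.card = (T.filter (fun s => x ∈ s ∧ u ∈ s)).card
      + (T.filter (fun s => y ∈ s ∧ v ∈ s)).card
      + (T.filter (fun s => ¬(x ∈ s ∧ u ∈ s) ∧ ¬(y ∈ s ∧ v ∈ s))).card := by
    apply split_count
    rintro s hs ⟨hx, hu⟩ ⟨hy, hv⟩
    exact hdisj s (mem_cliqueFinset_iff.mp hs).card_eq hx hy hu hv
  have hsplitG' : T'.card = (T'.filter (fun s => x ∈ s ∧ y ∈ s)).card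
      + (T'.filter (fun s => u ∈ s ∧ v ∈ s)).card
      + (T'.filter (fun s => ¬(x ∈ s ∧ y ∈ s) ∧ ¬(u ∈ s ∧ v ∈ s))).card := by
    apply split_count
    rintro s hs ⟨hx, hy⟩ ⟨hu, hv⟩
    exact hdisj s (mem_cliqueFinset_iff.mp hs).card_eq hx hy hu hv
  -- the "rest" triangles agree
  have hrest : T.filter (fun s => ¬(x ∈ s ∧ u ∈ s) ∧ ¬(y ∈ s ∧ v ∈ s))
      = T'.filter (fun s => ¬(x ∈ s ∧ y ∈ s) ∧ ¬(u ∈ s ∧ v ∈ s)) := by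
    ext s
    simp only [hT, hT', Finset.mem_filter, mem_cliqueFinset_iff, isNClique_iff]
    constructor
    · rintro ⟨⟨hcl, hcard⟩, hp1, hp2⟩
      have hQ1 : ¬(x ∈ s ∧ y ∈ s) := fun ⟨hx, hy⟩ =>
        hnxy (hcl (Finset.mem_coe.mpr hx) (Finset.mem_coe.mpr hy) hxy)
      have hQ2 : ¬(u ∈ s ∧ v ∈ s) := fun ⟨hu, hv⟩ =>
        hnuv (hcl (Finset.mem_coe.mpr hu) (Finset.mem_coe.mpr hv) huv)
      refine ⟨⟨?_, hcard⟩, hQ1, hQ2⟩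
      intro a ha b hb hne
      have hG := hcl ha hb hne
      rw [rewire2_adj]
      left
      refine ⟨hG, ?_, ?_⟩
      · intro he
        rw [Sym2.eq_iff] at he
        rcases he with ⟨rfl, rfl⟩ | ⟨rfl, rfl⟩
        · exact hp1 ⟨ha, hb⟩
        · exact hp1 ⟨hb, ha⟩
      · intro he
        rw [Sym2.eq_iff] at he
        rcases he with ⟨rfl, rfl⟩ | ⟨rfl, rfl⟩
        · exact hp2 ⟨ha, hb⟩
        · exact hp2 ⟨hb, ha⟩
    · rintro ⟨⟨hcl, hcard⟩, hq1, hq2⟩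
      have key : ∀ a ∈ s, ∀ b ∈ s, a ≠ b → G.Adj a b := by
        intro a ha b hb hne
        have h := hcl (Finset.mem_coe.mpr ha) (Finset.mem_coe.mpr hb) hne
        rw [rewire2_adj] at h
        rcases h with ⟨hG, _, _⟩ | ⟨(he | he), _⟩
        · exact hG
        · rw [Sym2.eq_iff] at he
          rcases he with ⟨rfl, rfl⟩ | ⟨rfl, rfl⟩
          · exact absurd ⟨ha, hb⟩ hq1
          · exact absurd ⟨hb, ha⟩ hq1
        · rw [Sym2.eq_iff] at he
          rcases he with ⟨rfl, rfl⟩ | ⟨rfl, rfl⟩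
          · exact absurd ⟨ha, hb⟩ hq2
          · exact absurd ⟨hb, ha⟩ hq2
      refine ⟨⟨fun a ha b hb hne => key a ha b hb hne, hcard⟩, ?_, ?_⟩
      · rintro ⟨hx, hu⟩
        exact hG'nxu (hcl (Finset.mem_coe.mpr hx) (Finset.mem_coe.mpr hu) hxu)
      · rintro ⟨hy, hv⟩
        exact hG'nyv (hcl (Finset.mem_coe.mpr hy) (Finset.mem_coe.mpr hv) hyv)
  have hA : (T.filter (fun s => x ∈ s ∧ u ∈ s)).card = (G.commonNeighbors x u).ncard :=
    count_edge G hexu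
  have hB : (T.filter (fun s => y ∈ s ∧ v ∈ s)).card = (G.commonNeighbors y v).ncard :=
    count_edge G heyv
  have hA' : (T'.filter (fun s => x ∈ s ∧ y ∈ s)).card = (G'.commonNeighbors x y).ncard :=
    count_edge G' hG'xy
  have hB' : (T'.filter (fun s => u ∈ s ∧ v ∈ s)).card = (G'.commonNeighbors u v).ncard :=
    count_edge G' hG'uv
  have htcG : triangleCount G = T.card := by
    rw [triangleCount, ← coe_cliqueFinset, Set.ncard_coe_finset]
  have htcG' : triangleCount G' = T'.card := by
    rw [triangleCount, ← coe_cliqueFinset, Set.ncard_coe_finset]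
  rw [htcG, htcG', hsplitG, hsplitG', hA, hB, hA', hB', hrest]
  push_cast
  ring
end

section
/- Let G be a finite simple graph with at least one wedge and let x, y, u, v be four distinct vertices such that {x,u} and {y,v} are edges of G while {x,y} and {u,v} are not edges of G. Let G' be the graph obtained from G by deleting the edges {x,u} and {y,v} and adding the edges {x,y} and {u,v}. If |N_{G'}(x,y)| + |N_{G'}(u,v)| > |N_G(x,u)| + |N_G(y,v)|, then the global clustering coefficient strictly increases: C(G') > C(G). -/
open SimpleGraph

/-- The global clustering coefficient `C(G) = 3 N_t(G) / N_p(G)`, as a rational number. -/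
noncomputable def clusteringCoeff {V : Type*} [Fintype V] (G : SimpleGraph V) : ℚ :=
  3 * (triangleCount G : ℚ) / (wedgeCount G : ℚ)

lemma rewire2_comm₁ {V : Type*} (G : SimpleGraph V) (x u y v : V) :
    rewire2 G x u y v = rewire2 G u x v y := by
  unfold rewire2
  rw [show s(u,x) = s(x,u) from Sym2.eq_swap, show s(v,y) = s(y,v) from Sym2.eq_swap,
    Set.pair_comm s(u,v) s(x,y)]

lemma rewire2_comm₂ {V : Type*} (G : SimpleGraph V) (x u y v : V) :
    rewire2 G x u y v = rewire2 G y v x u := by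
  unfold rewire2
  rw [show s(y,x) = s(x,y) from Sym2.eq_swap, show s(v,u) = s(u,v) from Sym2.eq_swap,
    Set.pair_comm s(y,v) s(x,u)]

lemma rewire2_neighborSet_x {V : Type*} (G : SimpleGraph V) (x u y v : V)
    (hxy : x ≠ y) (hxu : x ≠ u) (hxv : x ≠ v) :
    (rewire2 G x u y v).neighborSet x = insert y (G.neighborSet x \ {u}) := by
  ext b
  simp only [SimpleGraph.mem_neighborSet, rewire2_adj, ne_eq, Sym2.eq_iff, Set.mem_insert_iff,
    Set.mem_diff, Set.mem_singleton_iff]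
  constructor
  · rintro (⟨hadj, h1, h2⟩ | ⟨(⟨hx, hb⟩ | ⟨hx, hb⟩) | (⟨hx, hb⟩ | ⟨hx, hb⟩), hne⟩)
    · refine Or.inr ⟨hadj, fun hbu => h1 (Or.inl ⟨trivial, hbu⟩)⟩
    · exact Or.inl hb
    · exact absurd hx hxy
    · exact absurd hx hxu
    · exact absurd hx hxv
  · rintro (rfl | ⟨hadj, hbu⟩)
    · exact Or.inr ⟨Or.inl (Or.inl ⟨trivial, rfl⟩), hxy⟩
    · refine Or.inl ⟨hadj, ?_, ?_⟩
      · rintro (⟨-, h⟩ | ⟨h, -⟩)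
        · exact hbu h
        · exact hxu h
      · rintro (⟨h, -⟩ | ⟨h, -⟩)
        · exact hxy h
        · exact hxv h

lemma rewire2_neighborSet_other {V : Type*} (G : SimpleGraph V) (x u y v w : V)
    (hwx : w ≠ x) (hwu : w ≠ u) (hwy : w ≠ y) (hwv : w ≠ v) :
    (rewire2 G x u y v).neighborSet w = G.neighborSet w := by
  ext b
  simp only [SimpleGraph.mem_neighborSet, rewire2_adj, ne_eq, Sym2.eq_iff]
  constructor
  · rintro (⟨hadj, -, -⟩ | ⟨(⟨hx, -⟩ | ⟨hx, -⟩) | (⟨hx, -⟩ | ⟨hx, -⟩), -⟩)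
    · exact hadj
    · exact absurd hx hwx
    · exact absurd hx hwy
    · exact absurd hx hwu
    · exact absurd hx hwv
  · intro hadj
    refine Or.inl ⟨hadj, ?_, ?_⟩
    · rintro (⟨h, -⟩ | ⟨h, -⟩)
      · exact hwx h
      · exact hwu h
    · rintro (⟨h, -⟩ | ⟨h, -⟩)
      · exact hwy h
      · exact hwv h

lemma triangle_third {V : Type*} [DecidableEq V] {H : SimpleGraph V} {t : Finset V} {a b : V}
    (ht : H.IsNClique 3 t) (hat : a ∈ t) (hbt : b ∈ t) (hab : a ≠ b) :
    ∃ w, w ∈ H.commonNeighbors a b ∧ t = {a, b, w} := by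
  have hsub : ({a, b} : Finset V) ⊆ t := by
    intro z hz
    simp only [Finset.mem_insert, Finset.mem_singleton] at hz
    rcases hz with rfl | rfl <;> assumption
  have hcard2 : ({a, b} : Finset V).card = 2 := by
    rw [Finset.card_insert_of_notMem (by simpa using hab), Finset.card_singleton]
  have hcard : (t \ {a, b}).card = 1 := by
    rw [Finset.card_sdiff_of_subset hsub, ht.2, hcard2]
  obtain ⟨w, hw⟩ := Finset.card_eq_one.1 hcard
  have hwmem : w ∈ t \ ({a, b} : Finset V) := by rw [hw]; exact Finset.mem_singleton_self w
  rw [Finset.mem_sdiff, Finset.mem_insert, Finset.mem_singleton] at hwmem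
  obtain ⟨hwt, hwab⟩ := hwmem
  push_neg at hwab
  refine ⟨w, ?_, ?_⟩
  · rw [SimpleGraph.mem_commonNeighbors]
    exact ⟨ht.1 hat hwt (Ne.symm hwab.1), ht.1 hbt hwt (Ne.symm hwab.2)⟩
  · have := Finset.sdiff_union_of_subset hsub
    rw [hw] at this
    rw [← this]
    ext z
    simp only [Finset.mem_union, Finset.mem_singleton, Finset.mem_insert]
    tauto

lemma ncard_triangles_through {V : Type*} [DecidableEq V] (H : SimpleGraph V) (a b : V)
    (hab : H.Adj a b) :
    {t ∈ H.cliqueSet 3 | a ∈ t ∧ b ∈ t}.ncard = (H.commonNeighbors a b).ncard := by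
  have himg : (fun w => ({a, b, w} : Finset V)) '' (H.commonNeighbors a b)
      = {t ∈ H.cliqueSet 3 | a ∈ t ∧ b ∈ t} := by
    ext t
    constructor
    · rintro ⟨w, hw, rfl⟩
      rw [SimpleGraph.mem_commonNeighbors] at hw
      refine ⟨?_, by simp, by simp⟩
      rw [SimpleGraph.mem_cliqueSet_iff]
      exact SimpleGraph.is3Clique_triple_iff.2 ⟨hab, hw.1, hw.2⟩
    · rintro ⟨ht, hat, hbt⟩
      rw [SimpleGraph.mem_cliqueSet_iff] at ht
      obtain ⟨w, hw, rfl⟩ := triangle_third ht hat hbt hab.ne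
      exact ⟨w, hw, rfl⟩
  rw [← himg]
  apply Set.ncard_image_of_injOn
  intro w hw w' hw' h
  rw [SimpleGraph.mem_commonNeighbors] at hw hw'
  have h' : ({a, b, w} : Finset V) = {a, b, w'} := h
  have : w ∈ ({a, b, w'} : Finset V) := by rw [← h']; simp
  simp only [Finset.mem_insert, Finset.mem_singleton] at this
  rcases this with rfl | rfl | rfl
  · exact absurd rfl hw.1.ne
  · exact absurd rfl hw.2.ne
  · rfl

lemma cliqueSet_decomp {V : Type*} [Fintype V] [DecidableEq V] (H : SimpleGraph V)
    (a b c d : V) (hab : H.Adj a b) (hcd : H.Adj c d)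
    (hac : a ≠ c) (had : a ≠ d) (hbc : b ≠ c) (hbd : b ≠ d) :
    (H.cliqueSet 3).ncard =
      {t ∈ H.cliqueSet 3 | ¬(a ∈ t ∧ b ∈ t) ∧ ¬(c ∈ t ∧ d ∈ t)}.ncard
        + (H.commonNeighbors a b).ncard + (H.commonNeighbors c d).ncard := by
  set T₀ := {t ∈ H.cliqueSet 3 | ¬(a ∈ t ∧ b ∈ t) ∧ ¬(c ∈ t ∧ d ∈ t)} with hT₀
  set S₁ := {t ∈ H.cliqueSet 3 | a ∈ t ∧ b ∈ t} with hS₁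
  set S₂ := {t ∈ H.cliqueSet 3 | c ∈ t ∧ d ∈ t} with hS₂
  have hunion : H.cliqueSet 3 = (T₀ ∪ S₁) ∪ S₂ := by
    ext t
    constructor
    · intro ht
      by_cases h1 : a ∈ t ∧ b ∈ t
      · exact Or.inl (Or.inr ⟨ht, h1⟩)
      by_cases h2 : c ∈ t ∧ d ∈ t
      · exact Or.inr ⟨ht, h2⟩
      · exact Or.inl (Or.inl ⟨ht, h1, h2⟩)
    · rintro ((h | h) | h) <;> exact h.1
  have hd12 : Disjoint S₁ S₂ := by
    rw [Set.disjoint_left]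
    rintro t ⟨ht, hat, hbt⟩ ⟨-, hct, hdt⟩
    have hsub : ({a, b, c, d} : Finset V) ⊆ t := by
      intro z hz
      simp only [Finset.mem_insert, Finset.mem_singleton] at hz
      rcases hz with rfl | rfl | rfl | rfl <;> assumption
    have h4 : ({a, b, c, d} : Finset V).card = 4 := by
      rw [Finset.card_insert_of_notMem (by simp [hab.ne, hac, had]),
        Finset.card_insert_of_notMem (by simp [hbc, hbd]),
        Finset.card_insert_of_notMem (by simp [hcd.ne]), Finset.card_singleton]
    have hle := Finset.card_le_card hsub
    rw [h4, (SimpleGraph.mem_cliqueSet_iff.1 ht).2] at hle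
    omega
  have hd01 : Disjoint T₀ S₁ := by
    rw [Set.disjoint_left]
    rintro t ⟨-, h1, -⟩ ⟨-, h⟩
    exact h1 h
  have hd02 : Disjoint (T₀ ∪ S₁) S₂ := by
    rw [Set.disjoint_union_left]
    refine ⟨?_, hd12⟩
    rw [Set.disjoint_left]
    rintro t ⟨-, -, h2⟩ ⟨-, h⟩
    exact h2 h
  rw [hunion, Set.ncard_union_eq hd02 (Set.toFinite _) (Set.toFinite _),
    Set.ncard_union_eq hd01 (Set.toFinite _) (Set.toFinite _),
    ncard_triangles_through H a b hab, ncard_triangles_through H c d hcd]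

/-- if `G` has at least one wedge and the double rewiring replacing the
edges `{x,u}`, `{y,v}` by the non-edges `{x,y}`, `{u,v}` satisfies
`|N_{G'}(x,y)| + |N_{G'}(u,v)| > |N_G(x,u)| + |N_G(y,v)|`, then the global clustering
coefficient strictly increases. -/
theorem clustering_rewire2_increase {V : Type*} [Fintype V] (G : SimpleGraph V)
    (x y u v : V)
    (hwedge : 0 < wedgeCount G)
    (hxy : x ≠ y) (hxu : x ≠ u) (hxv : x ≠ v) (hyu : y ≠ u) (hyv : y ≠ v) (huv : u ≠ v)
    (hexu : G.Adj x u) (heyv : G.Adj y v)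
    (hnxy : ¬ G.Adj x y) (hnuv : ¬ G.Adj u v)
    (hN : (G.commonNeighbors x u).ncard + (G.commonNeighbors y v).ncard <
      ((rewire2 G x u y v).commonNeighbors x y).ncard +
        ((rewire2 G x u y v).commonNeighbors u v).ncard) :
    clusteringCoeff G < clusteringCoeff (rewire2 G x u y v) := by
  classical
  set G' := rewire2 G x u y v with hG'
  -- adjacency facts in G'
  have hA_xy : G'.Adj x y := by
    rw [hG', rewire2_adj]
    exact Or.inr ⟨Or.inl rfl, hxy⟩
  have hA_uv : G'.Adj u v := by
    rw [hG', rewire2_adj]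
    exact Or.inr ⟨Or.inr rfl, huv⟩
  have hNA_xu : ¬ G'.Adj x u := by
    rw [hG', rewire2_adj]
    rintro (⟨-, h, -⟩ | ⟨(h | h), -⟩)
    · exact h rfl
    · rw [Sym2.eq_iff] at h
      rcases h with ⟨-, h⟩ | ⟨h, -⟩
      · exact hyu h.symm
      · exact hxy h
    · rw [Sym2.eq_iff] at h
      rcases h with ⟨h, -⟩ | ⟨h, -⟩
      · exact hxu h
      · exact hxv h
  have hNA_yv : ¬ G'.Adj y v := by
    rw [hG', rewire2_adj]
    rintro (⟨-, -, h⟩ | ⟨(h | h), -⟩)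
    · exact h rfl
    · rw [Sym2.eq_iff] at h
      rcases h with ⟨h, -⟩ | ⟨-, h⟩
      · exact hxy h.symm
      · exact hxv h.symm
    · rw [Sym2.eq_iff] at h
      rcases h with ⟨h, -⟩ | ⟨h, -⟩
      · exact hyu h
      · exact hyv h
  -- degrees are preserved
  have hdeg : ∀ w : V, (G'.neighborSet w).ncard = (G.neighborSet w).ncard := by
    intro w
    by_cases hwx : w = x
    · subst hwx
      rw [hG', rewire2_neighborSet_x G w u y v hxy hxu hxv]
      exact Set.ncard_exchange (fun h => hnxy h) hexu
    by_cases hwu : w = u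
    · subst hwu
      rw [hG', rewire2_comm₁ G x w y v,
        rewire2_neighborSet_x G w x v y huv hxu.symm hyu.symm]
      exact Set.ncard_exchange (fun h => hnuv h) hexu.symm
    by_cases hwy : w = y
    · subst hwy
      rw [hG', rewire2_comm₂ G x u w v,
        rewire2_neighborSet_x G w v x u hxy.symm hyv hyu]
      exact Set.ncard_exchange (fun h => hnxy (h.symm)) heyv
    by_cases hwv : w = v
    · subst hwv
      rw [hG', rewire2_comm₂ G x u y w, rewire2_comm₁ G y w x u,
        rewire2_neighborSet_x G w y u x huv.symm hyv.symm hxv.symm]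
      exact Set.ncard_exchange (fun h => hnuv (h.symm)) heyv.symm
    · rw [hG', rewire2_neighborSet_other G x u y v w hwx hwu hwy hwv]
  have hW : wedgeCount G' = wedgeCount G := by
    unfold wedgeCount
    exact Finset.sum_congr rfl fun w _ => by rw [hdeg w]
  -- the triangles avoiding the touched pairs coincide
  have hT0 : {t ∈ G.cliqueSet 3 | ¬(x ∈ t ∧ u ∈ t) ∧ ¬(y ∈ t ∧ v ∈ t)}
      = {t ∈ G'.cliqueSet 3 | ¬(x ∈ t ∧ y ∈ t) ∧ ¬(u ∈ t ∧ v ∈ t)} := by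
    ext t
    constructor
    · rintro ⟨ht, h1, h2⟩
      rw [SimpleGraph.mem_cliqueSet_iff] at ht
      refine ⟨SimpleGraph.mem_cliqueSet_iff.2 ⟨?_, ht.2⟩, ?_, ?_⟩
      · intro p hp q hq hpq
        have hG := ht.1 hp hq hpq
        rw [hG', rewire2_adj]
        refine Or.inl ⟨hG, ?_, ?_⟩
        · intro h
          rw [Sym2.eq_iff] at h
          rcases h with ⟨hpx, hqu⟩ | ⟨hpu, hqx⟩
          · exact h1 ⟨hpx ▸ hp, hqu ▸ hq⟩
          · exact h1 ⟨hqx ▸ hq, hpu ▸ hp⟩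
        · intro h
          rw [Sym2.eq_iff] at h
          rcases h with ⟨hpy, hqv⟩ | ⟨hpv, hqy⟩
          · exact h2 ⟨hpy ▸ hp, hqv ▸ hq⟩
          · exact h2 ⟨hqy ▸ hq, hpv ▸ hp⟩
      · rintro ⟨hxt, hyt⟩
        exact hnxy (ht.1 hxt hyt hxy)
      · rintro ⟨hut, hvt⟩
        exact hnuv (ht.1 hut hvt huv)
    · rintro ⟨ht, h1, h2⟩
      rw [SimpleGraph.mem_cliqueSet_iff] at ht
      refine ⟨SimpleGraph.mem_cliqueSet_iff.2 ⟨?_, ht.2⟩, ?_, ?_⟩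
      · intro p hp q hq hpq
        have hG := ht.1 hp hq hpq
        rw [hG', rewire2_adj] at hG
        rcases hG with ⟨hG, -, -⟩ | ⟨(h | h), -⟩
        · exact hG
        · rw [Sym2.eq_iff] at h
          rcases h with ⟨hpx, hqy⟩ | ⟨hpy, hqx⟩
          · exact absurd ⟨hpx ▸ hp, hqy ▸ hq⟩ h1
          · exact absurd ⟨hqx ▸ hq, hpy ▸ hp⟩ h1
        · rw [Sym2.eq_iff] at h
          rcases h with ⟨hpu, hqv⟩ | ⟨hpv, hqu⟩
          · exact absurd ⟨hpu ▸ hp, hqv ▸ hq⟩ h2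
          · exact absurd ⟨hqu ▸ hq, hpv ▸ hp⟩ h2
      · rintro ⟨hxt, hut⟩
        exact hNA_xu (ht.1 hxt hut hxu)
      · rintro ⟨hyt, hvt⟩
        exact hNA_yv (ht.1 hyt hvt hyv)
  -- triangle counts
  have e1 := cliqueSet_decomp G x u y v hexu heyv hxy hxv hyu.symm huv
  have e2 := cliqueSet_decomp G' x y u v hA_xy hA_uv hxu hxv hyu hyv
  have hT : triangleCount G < triangleCount G' := by
    rw [triangleCount, triangleCount, e1, e2, ← hT0]
    omega
  -- conclude
  rw [clusteringCoeff, clusteringCoeff, hW]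
  have h0 : (0 : ℚ) < (wedgeCount G : ℚ) := by exact_mod_cast hwedge
  rw [div_lt_div_iff_of_pos_right h0]
  have : (triangleCount G : ℚ) < (triangleCount G' : ℚ) := by exact_mod_cast hT
  linarith
end
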